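/- arXiv:2106.10535 — 3 statements merged into one kernel-verified Lean document; each statement's English description precedes it below -/
import Mathlib

section
/- Let Z_1, …, Z_n be independent random variables, each distributed as N(0, σ²) with σ > 0. Then for every t with 0 < t ≤ σ², P( | (1/n) Σ_{k=1}^n Z_k² − σ² | ≥ t ) ≤ 2 exp( − n t² / (8 σ⁴) ). -/
open MeasureTheory ProbabilityTheory Real
open scoped NNReal ENNReal


open MeasureTheory ProbabilityTheory Real
open scoped NNReal ENNReal

lemma integral_exp_sq_gaussian (v : ℝ≥0) (hv : 0 < v) {s : ℝ} (hs : 2 * s * v < 1) :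
    Integrable (fun x => Real.exp (s * x ^ 2)) (gaussianReal 0 v) ∧
    ∫ x, Real.exp (s * x ^ 2) ∂(gaussianReal 0 v) = (Real.sqrt (1 - 2 * s * v))⁻¹ := by
  have hv0 : (0:ℝ) < v := hv
  have hvne : (v:ℝ) ≠ 0 := hv0.ne'
  set b : ℝ := 1 / (2 * v) - s with hb_def
  have hb : 0 < b := by
    rw [hb_def, sub_pos, lt_div_iff₀ (by positivity)]
    linarith [hs]
  have hc : (0:ℝ) < 1 - 2 * s * v := by linarith
  have h2piv : (0:ℝ) < 2 * π * v := by positivity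
  have hpdf : ∀ x : ℝ, gaussianPDFReal 0 v x * Real.exp (s * x ^ 2)
      = (Real.sqrt (2 * π * v))⁻¹ * Real.exp (-b * x ^ 2) := by
    intro x
    rw [gaussianPDFReal, mul_assoc, ← Real.exp_add]
    congr 2
    rw [hb_def]
    field_simp
    ring
  have hint : Integrable (fun x => (Real.sqrt (2 * π * v))⁻¹ * Real.exp (-b * x ^ 2)) volume :=
    (integrable_exp_neg_mul_sq hb).const_mul _
  set f : ℝ → ℝ≥0 := fun x => (gaussianPDFReal 0 v x).toNNReal with hf_def
  have hf_meas : Measurable f := (measurable_gaussianPDFReal 0 v).real_toNNReal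
  have hrw : gaussianReal 0 v = volume.withDensity fun x => (f x : ℝ≥0∞) := by
    rw [gaussianReal_of_var_ne_zero _ (by exact_mod_cast hvne)]
    rfl
  have hsmul : ∀ x : ℝ, (f x : ℝ) • Real.exp (s * x ^ 2)
      = (Real.sqrt (2 * π * v))⁻¹ * Real.exp (-b * x ^ 2) := by
    intro x
    rw [smul_eq_mul, hf_def]
    beta_reduce
    rw [Real.coe_toNNReal _ (gaussianPDFReal_nonneg 0 v x)]
    exact hpdf x
  constructor
  · rw [hrw, integrable_withDensity_iff_integrable_coe_smul hf_meas]
    exact hint.congr (Filter.Eventually.of_forall fun x => (hsmul x).symm)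
  · rw [hrw, integral_withDensity_eq_integral_smul hf_meas]
    calc ∫ x, f x • Real.exp (s * x ^ 2)
        = ∫ x : ℝ, (Real.sqrt (2 * π * v))⁻¹ * Real.exp (-b * x ^ 2) := by
          refine integral_congr_ae (Filter.Eventually.of_forall fun x => ?_)
          exact hsmul x
      _ = (Real.sqrt (2 * π * v))⁻¹ * ∫ x : ℝ, Real.exp (-b * x ^ 2) :=
          integral_const_mul _ _
      _ = (Real.sqrt (2 * π * v))⁻¹ * Real.sqrt (π / b) := by rw [integral_gaussian]
      _ = (Real.sqrt (1 - 2 * s * v))⁻¹ := by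
          have h1 : π / b = (2 * π * v) / (1 - 2 * s * v) := by
            rw [div_eq_div_iff hb.ne' hc.ne', hb_def]
            field_simp
          rw [h1, Real.sqrt_div h2piv.le, div_eq_mul_inv, ← mul_assoc,
            inv_mul_cancel₀ (Real.sqrt_ne_zero'.mpr h2piv), one_mul]

open Real

lemma sqrt_one_sub_inv_le {x : ℝ} (h0 : 0 ≤ x) (h2 : x ≤ 1 / 2) :
    (Real.sqrt (1 - x))⁻¹ ≤ Real.exp ((x + x ^ 2) / 2) := by
  have h1 : (0:ℝ) < 1 - x := by linarith
  have hy : 0 ≤ x + x ^ 2 := by positivity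
  have hq := Real.quadratic_le_exp_of_nonneg hy
  have key : Real.exp (-(x + x ^ 2)) ≤ 1 - x := by
    rw [Real.exp_neg, inv_le_comm₀ (Real.exp_pos _) h1]
    calc (1 - x)⁻¹ ≤ 1 + (x + x ^ 2) + (x + x ^ 2) ^ 2 / 2 := by
          rw [inv_le_iff_one_le_mul₀ h1]
          nlinarith [sq_nonneg x, pow_le_pow_left₀ h0 h2 3]
      _ ≤ Real.exp (x + x ^ 2) := hq
  have hsq : Real.exp (-((x + x ^ 2) / 2)) ≤ Real.sqrt (1 - x) := by
    rw [show Real.exp (-((x + x ^ 2) / 2)) =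
        Real.sqrt (Real.exp (-(x + x ^ 2))) from ?_]
    · exact Real.sqrt_le_sqrt key
    · rw [show -(x + x ^ 2) = -((x + x ^ 2) / 2) + -((x + x ^ 2) / 2) by ring,
        Real.exp_add, Real.sqrt_mul_self (Real.exp_pos _).le]
  have h3 := inv_anti₀ (Real.exp_pos _) hsq
  rwa [Real.exp_neg, inv_inv] at h3

lemma sqrt_one_add_inv_le {x : ℝ} (h0 : 0 ≤ x) :
    (Real.sqrt (1 + x))⁻¹ ≤ Real.exp (-(x / (2 * (1 + x)))) := by
  have h1 : (0:ℝ) < 1 + x := by linarith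
  set y : ℝ := x / (1 + x) with hy_def
  have hy1 : 1 - y = (1 + x)⁻¹ := by
    rw [hy_def]; field_simp; ring
  have key : Real.exp y ≤ 1 + x := by
    have h2 : (1 + x)⁻¹ ≤ Real.exp (-y) := by
      rw [← hy1]
      linarith [Real.add_one_le_exp (-y)]
    have h3 := inv_anti₀ (by positivity) h2
    rwa [Real.exp_neg, inv_inv, inv_inv] at h3
  have hsq : Real.exp (x / (2 * (1 + x))) ≤ Real.sqrt (1 + x) := by
    rw [show Real.exp (x / (2 * (1 + x))) = Real.sqrt (Real.exp y) from ?_]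
    · exact Real.sqrt_le_sqrt key
    · rw [show y = x / (2 * (1 + x)) + x / (2 * (1 + x)) by rw [hy_def]; field_simp; ring,
        Real.exp_add, Real.sqrt_mul_self (Real.exp_pos _).le]
  have h3 := inv_anti₀ (Real.exp_pos _) hsq
  rwa [← Real.exp_neg] at h3


lemma lower_exponent {a t s : ℝ} (ha : 0 < a) (ht : 0 < t) (hs : s = t / (4 * a ^ 2)) :
    s * (a - t) - 2 * s * a / (2 * (1 + 2 * s * a)) ≤ -(t ^ 2 / (8 * a ^ 2)) := by
  have hsa : 0 < 2 * s * a := by rw [hs]; positivity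
  have hpos : (0:ℝ) < 2 * (1 + 2 * s * a) := by linarith
  have hspos : 0 < s := by rw [hs]; positivity
  have key : (s * (a - t) + t ^ 2 / (8 * a ^ 2)) * (2 * (1 + 2 * s * a)) ≤ 2 * s * a := by
    have h8 : (0:ℝ) < 8 * a ^ 2 := by positivity
    have e1 : s * (a - t) + t ^ 2 / (8 * a ^ 2)
        = (s * (a - t) * (8 * a ^ 2) + t ^ 2) / (8 * a ^ 2) := by field_simp
    rw [e1, div_mul_eq_mul_div, div_le_iff₀ h8]
    have h4 : t = 4 * a ^ 2 * s := by rw [hs]; field_simp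
    subst h4
    nlinarith [mul_pos (pow_pos ha 5) (pow_pos hspos 3)]
  have := (le_div_iff₀ hpos).mpr key
  linarith

/-- concentration of the empirical second moment of i.i.d. N(0, σ²)
random variables: P(|(1/n)Σ Z_k² − σ²| ≥ t) ≤ 2 exp(−n t²/(8σ⁴)) for 0 < t ≤ σ². -/
theorem stmt_3 {Ω : Type*} [MeasurableSpace Ω] (μ : Measure Ω) [IsProbabilityMeasure μ]
    (n : ℕ) (hn : 0 < n) (σ : ℝ≥0) (hσ : 0 < σ)
    (Z : Fin n → Ω → ℝ)
    (hmeas : ∀ k, Measurable (Z k))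
    (hindep : iIndepFun Z μ)
    (hdist : ∀ k, Measure.map (Z k) μ = gaussianReal 0 (σ ^ 2)) :
    ∀ t : ℝ, 0 < t → t ≤ (σ : ℝ) ^ 2 →
      μ {ω | t ≤ |(1 / n : ℝ) * ∑ k, (Z k ω) ^ 2 - (σ : ℝ) ^ 2|}
        ≤ ENNReal.ofReal (2 * Real.exp (-(n * t ^ 2 / (8 * (σ : ℝ) ^ 4)))) := by
  intro t ht hta
  have hn' : (0:ℝ) < n := Nat.cast_pos.mpr hn
  rw [show ((σ:ℝ)) ^ 4 = ((σ:ℝ) ^ 2) ^ 2 by ring]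
  set a : ℝ := (σ:ℝ) ^ 2 with ha_def
  have ha : 0 < a := by rw [ha_def]; positivity
  have hv : (0:ℝ≥0) < σ ^ 2 := by positivity
  have hcast : ((σ ^ 2 : ℝ≥0) : ℝ) = a := by rw [ha_def]; push_cast; ring
  set W : Fin n → Ω → ℝ := fun k ω => Z k ω ^ 2 with hW_def
  have hWmeas : ∀ k, Measurable (W k) := fun k => (hmeas k).pow_const 2
  have hWindep : iIndepFun W μ :=
    hindep.comp (fun _ x => x ^ 2) (fun _ => measurable_id.pow_const 2)
  set X : Ω → ℝ := ∑ k, W k with hX_def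
  have hXapp : ∀ ω, X ω = ∑ k, Z k ω ^ 2 := fun ω => by
    rw [hX_def]; simp [hW_def]
  -- per-coordinate integrability and mgf value
  have hmain : ∀ r : ℝ, 2 * r * a < 1 →
      (∀ k, Integrable (fun ω => Real.exp (r * W k ω)) μ) ∧
      (∀ k, mgf (W k) μ r = (Real.sqrt (1 - 2 * r * a))⁻¹) := by
    intro r hr
    have hr' : 2 * r * ((σ ^ 2 : ℝ≥0) : ℝ) < 1 := by rwa [hcast]
    obtain ⟨hint, hval⟩ := integral_exp_sq_gaussian (σ ^ 2) hv hr'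
    have hIk : ∀ k, Integrable (fun x => Real.exp (r * x ^ 2)) (Measure.map (Z k) μ) := by
      intro k; rw [hdist k]; exact hint
    refine ⟨fun k => ?_, fun k => ?_⟩
    · exact (integrable_map_measure (hIk k).1 (hmeas k).aemeasurable).mp (hIk k)
    · have h1 : mgf (W k) μ r = ∫ x, Real.exp (r * x ^ 2) ∂(Measure.map (Z k) μ) :=
        (integral_map (hmeas k).aemeasurable (hIk k).1).symm
      rw [h1, hdist k, hval, hcast]
  -- mgf and integrability of the sum
  have hXint : ∀ r : ℝ, 2 * r * a < 1 → Integrable (fun ω => Real.exp (r * X ω)) μ := by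
    intro r hr
    exact hWindep.integrable_exp_mul_sum hWmeas (fun k _ => (hmain r hr).1 k)
  have hXmgf : ∀ r : ℝ, 2 * r * a < 1 →
      mgf X μ r = ((Real.sqrt (1 - 2 * r * a))⁻¹) ^ n := by
    intro r hr
    rw [hX_def, hWindep.mgf_sum hWmeas]
    simp only [(hmain r hr).2, Finset.prod_const, Finset.card_univ, Fintype.card_fin]
  -- the Chernoff parameter
  set s : ℝ := t / (4 * a ^ 2) with hs_def
  have hspos : 0 < s := by rw [hs_def]; positivity
  have h2sa : 2 * s * a ≤ 1 / 2 := by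
    rw [hs_def]
    have e : 2 * (t / (4 * a ^ 2)) * a = t / (2 * a) := by field_simp; ring
    rw [e, div_le_iff₀ (by positivity)]
    linarith
  have hs1 : 2 * s * a < 1 := by linarith
  have h2sapos : 0 < 2 * s * a := by positivity
  have hsneg : 2 * (-s) * a < 1 := by nlinarith
  set Ebnd : ℝ := Real.exp (-(n * t ^ 2 / (8 * a ^ 2))) with hE_def
  -- upper tail
  have hA : (μ {ω | (n:ℝ) * (a + t) ≤ X ω}).toReal ≤ Ebnd := by
    have h := measure_ge_le_exp_mul_mgf (μ := μ) (X := X) ((n:ℝ) * (a + t)) hspos.le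
      (hXint s hs1)
    rw [hXmgf s hs1] at h
    refine h.trans ?_
    calc Real.exp (-s * ((n:ℝ) * (a + t))) * ((Real.sqrt (1 - 2 * s * a))⁻¹) ^ n
        ≤ Real.exp (-s * ((n:ℝ) * (a + t)))
          * (Real.exp ((2 * s * a + (2 * s * a) ^ 2) / 2)) ^ n := by
          gcongr
          exact sqrt_one_sub_inv_le h2sapos.le h2sa
      _ = Real.exp (-s * ((n:ℝ) * (a + t)) + n * ((2 * s * a + (2 * s * a) ^ 2) / 2)) := by
          rw [← Real.exp_nat_mul, ← Real.exp_add]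
      _ ≤ Ebnd := by
          rw [hE_def, Real.exp_le_exp]
          have : -s * ((n:ℝ) * (a + t)) + n * ((2 * s * a + (2 * s * a) ^ 2) / 2)
              = -((n:ℝ) * t ^ 2 / (8 * a ^ 2)) := by
            rw [hs_def]; field_simp; ring
          rw [this]
  -- lower tail
  have hB : (μ {ω | X ω ≤ (n:ℝ) * (a - t)}).toReal ≤ Ebnd := by
    have h := measure_le_le_exp_mul_mgf (μ := μ) (X := X) ((n:ℝ) * (a - t))
      (neg_nonpos.mpr hspos.le) (hXint (-s) hsneg)
    rw [hXmgf (-s) hsneg] at h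
    rw [show (1 : ℝ) - 2 * -s * a = 1 + 2 * s * a by ring] at h
    refine h.trans ?_
    calc Real.exp (- -s * ((n:ℝ) * (a - t))) * ((Real.sqrt (1 + 2 * s * a))⁻¹) ^ n
        ≤ Real.exp (- -s * ((n:ℝ) * (a - t)))
          * (Real.exp (-(2 * s * a / (2 * (1 + 2 * s * a))))) ^ n := by
          gcongr
          exact sqrt_one_add_inv_le h2sapos.le
      _ = Real.exp (- -s * ((n:ℝ) * (a - t)) + n * -(2 * s * a / (2 * (1 + 2 * s * a)))) := by
          rw [← Real.exp_nat_mul, ← Real.exp_add]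
      _ ≤ Ebnd := by
          rw [hE_def, Real.exp_le_exp]
          have hle := lower_exponent ha ht hs_def
          have : - -s * ((n:ℝ) * (a - t)) + n * -(2 * s * a / (2 * (1 + 2 * s * a)))
              = (n:ℝ) * (s * (a - t) - 2 * s * a / (2 * (1 + 2 * s * a))) := by ring
          rw [this, show -((n:ℝ) * t ^ 2 / (8 * a ^ 2)) = (n:ℝ) * -(t ^ 2 / (8 * a ^ 2)) by ring]
          exact mul_le_mul_of_nonneg_left hle hn'.le
  -- combine
  have hsub : {ω | t ≤ |(1 / n : ℝ) * ∑ k, (Z k ω) ^ 2 - a|}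
      ⊆ {ω | (n:ℝ) * (a + t) ≤ X ω} ∪ {ω | X ω ≤ (n:ℝ) * (a - t)} := by
    intro ω hω
    simp only [Set.mem_setOf_eq] at hω
    rcases le_abs.mp hω with h1 | h1
    · left
      simp only [Set.mem_setOf_eq, hXapp]
      have h2 : a + t ≤ 1 / (n:ℝ) * ∑ k, Z k ω ^ 2 := by linarith
      calc (n:ℝ) * (a + t) ≤ (n:ℝ) * (1 / (n:ℝ) * ∑ k, Z k ω ^ 2) := by
            exact mul_le_mul_of_nonneg_left h2 hn'.le
        _ = ∑ k, Z k ω ^ 2 := by field_simp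
    · right
      simp only [Set.mem_setOf_eq, hXapp]
      have h2 : 1 / (n:ℝ) * ∑ k, Z k ω ^ 2 ≤ a - t := by linarith
      calc ∑ k, Z k ω ^ 2 = (n:ℝ) * (1 / (n:ℝ) * ∑ k, Z k ω ^ 2) := by field_simp
        _ ≤ (n:ℝ) * (a - t) := mul_le_mul_of_nonneg_left h2 hn'.le
  calc μ {ω | t ≤ |(1 / n : ℝ) * ∑ k, (Z k ω) ^ 2 - a|}
      ≤ μ ({ω | (n:ℝ) * (a + t) ≤ X ω} ∪ {ω | X ω ≤ (n:ℝ) * (a - t)}) := measure_mono hsub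
    _ ≤ μ {ω | (n:ℝ) * (a + t) ≤ X ω} + μ {ω | X ω ≤ (n:ℝ) * (a - t)} := measure_union_le _ _
    _ ≤ ENNReal.ofReal Ebnd + ENNReal.ofReal Ebnd := by
        refine add_le_add ?_ ?_
        · rw [← ENNReal.ofReal_toReal (measure_ne_top μ _)]
          exact ENNReal.ofReal_le_ofReal hA
        · rw [← ENNReal.ofReal_toReal (measure_ne_top μ _)]
          exact ENNReal.ofReal_le_ofReal hB
    _ = ENNReal.ofReal (2 * Real.exp (-((n:ℝ) * t ^ 2 / (8 * a ^ 2)))) := by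
        rw [← ENNReal.ofReal_add (Real.exp_nonneg _) (Real.exp_nonneg _)]
        congr 1
        ring
end

section
/- Let h_i denote the degree-i probabilists' Hermite polynomial. Fix a constant 0 < C ≤ 1, an even integer i > 0, a real b, and x₁ ∈ [0, C]. For independent standard Gaussians α, β ~ N(0, 1), E[ h_i( (α x₁ + β sqrt(C² − x₁²)) / C ) · 1{α ≥ b} ] = q_i · x₁^i, where q_i = ( (i−1)!! · exp(−b²/2) / ( C^i sqrt(2π) ) ) · Σ_{r odd, 1 ≤ r ≤ i−1} ( (−1)^{(i−r−1)/2} / r!! ) · binom( i/2 − 1, (r−1)/2 ) · b^r. -/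
open Polynomial MeasureTheory ProbabilityTheory Filter Real
open scoped NNReal ENNReal Nat

lemma st10_derivative_hermite (n : ℕ) :
    derivative (hermite (n + 1)) = C ((n : ℤ) + 1) * hermite n := by
  ext k
  rw [coeff_derivative, coeff_C_mul, coeff_hermite, coeff_hermite]
  by_cases h : Even (n + k)
  · have h' : Even (n + 1 + (k + 1)) := by
      rcases h with ⟨m, hm⟩; exact ⟨m + 1, by omega⟩
    rw [if_pos h', if_pos h]
    have hs : n + 1 - (k + 1) = n - k := by omega
    rw [hs]
    have hc : ((k : ℤ) + 1) * (n + 1).choose (k + 1) = ((n : ℤ) + 1) * n.choose k := by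
      have := Nat.add_one_mul_choose_eq n k
      have : ((n + 1) * n.choose k : ℤ) = ((n + 1).choose (k + 1) * (k + 1) : ℤ) := by
        exact_mod_cast congrArg (Nat.cast : ℕ → ℤ) this
      linarith
    push_cast
    push_cast at hc
    linear_combination ((-1:ℤ)^((n-k)/2) * ((n - k - 1).doubleFactorial : ℤ)) * hc
  · have h' : ¬ Even (n + 1 + (k + 1)) := by
      intro hc; apply h
      rcases hc with ⟨m, hm⟩; exact ⟨m - 1, by omega⟩
    rw [if_neg h', if_neg h, zero_mul, mul_zero]

noncomputable def st10H (n : ℕ) : Polynomial ℝ := (hermite n).map (algebraMap ℤ ℝ)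

lemma st10H_eval (n : ℕ) (x : ℝ) : (st10H n).eval x = aeval x (hermite n) := by
  rw [st10H, aeval_def, eval₂_eq_eval_map]

lemma st10H_zero : st10H 0 = 1 := by simp [st10H, hermite_zero]

lemma st10H_one : st10H 1 = X := by simp [st10H, hermite_one]

lemma st10H_deriv (n : ℕ) : derivative (st10H (n + 1)) = C ((n : ℝ) + 1) * st10H n := by
  rw [st10H, st10H, derivative_map, st10_derivative_hermite, Polynomial.map_mul, map_C]
  push_cast
  ring_nf

lemma st10H_succ (n : ℕ) : st10H (n + 1) = X * st10H n - derivative (st10H n) := by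
  simp only [st10H, hermite_succ, Polynomial.map_sub, Polynomial.map_mul, map_X, derivative_map]

lemma st10H_succ_succ (n : ℕ) :
    st10H (n + 2) = X * st10H (n + 1) - C ((n : ℝ) + 1) * st10H n := by
  rw [show n + 2 = (n + 1) + 1 from rfl, st10H_succ, st10H_deriv]

lemma st10_pdf (x : ℝ) :
    gaussianPDFReal 0 1 x = (Real.sqrt (2 * Real.pi))⁻¹ * Real.exp (-x ^ 2 / 2) := by
  simp [gaussianPDFReal]

lemma st10_integral_g01 (f : ℝ → ℝ) :
    ∫ x, f x ∂(gaussianReal 0 1) = ∫ x, gaussianPDFReal 0 1 x * f x := by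
  rw [gaussianReal_of_var_ne_zero 0 one_ne_zero]
  have h : gaussianPDF 0 1 = fun x => ((Real.toNNReal (gaussianPDFReal 0 1 x) : ℝ≥0) : ℝ≥0∞) :=
    rfl
  rw [h, integral_withDensity_eq_integral_smul
    ((measurable_gaussianPDFReal 0 1).real_toNNReal) f]
  congr 1
  ext x
  rw [NNReal.smul_def, smul_eq_mul, Real.coe_toNNReal _ (gaussianPDFReal_nonneg 0 1 x)]

lemma st10_integrable_g01_iff {f : ℝ → ℝ} :
    Integrable f (gaussianReal 0 1) ↔
      Integrable (fun x => f x * gaussianPDFReal 0 1 x) volume := by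
  rw [gaussianReal_of_var_ne_zero 0 one_ne_zero]
  rw [integrable_withDensity_iff (measurable_gaussianPDF 0 1)
    (Filter.Eventually.of_forall fun x => ENNReal.ofReal_lt_top)]
  constructor <;> intro h <;> refine h.congr (Filter.Eventually.of_forall fun x => ?_) <;>
    simp [gaussianPDF, ENNReal.toReal_ofReal (gaussianPDFReal_nonneg 0 1 x)]

lemma st10_integrable_pow_exp (n : ℕ) :
    Integrable (fun x : ℝ => x ^ n * Real.exp (-x ^ 2 / 2)) volume := by
  have h := integrable_rpow_mul_exp_neg_mul_sq (by norm_num : (0:ℝ) < 1/2)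
    (by exact_mod_cast neg_one_lt_zero.trans_le (Nat.cast_nonneg n) : (-1 : ℝ) < n)
  simp only [Real.rpow_natCast] at h
  refine h.congr (Filter.Eventually.of_forall fun x => ?_)
  ring_nf

lemma st10_integrable_poly_exp (P : Polynomial ℝ) :
    Integrable (fun x : ℝ => P.eval x * Real.exp (-x ^ 2 / 2)) volume := by
  induction P using Polynomial.induction_on' with
  | add p q hp hq =>
    have := hp.add hq
    refine this.congr (Filter.Eventually.of_forall fun x => ?_)
    simp [add_mul]
  | monomial n a =>
    have := (st10_integrable_pow_exp n).const_mul a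
    refine this.congr (Filter.Eventually.of_forall fun x => ?_)
    simp [Polynomial.eval_monomial]
    ring

lemma st10_integrable_poly (P : Polynomial ℝ) :
    Integrable (fun x => P.eval x) (gaussianReal 0 1) := by
  rw [st10_integrable_g01_iff]
  have := (st10_integrable_poly_exp P).const_mul (Real.sqrt (2 * Real.pi))⁻¹
  refine this.congr (Filter.Eventually.of_forall fun x => ?_)
  simp only [st10_pdf]
  ring

lemma st10_tendsto_poly_gauss_atTop (P : Polynomial ℝ) :
    Tendsto (fun x => P.eval x * Real.exp (-x ^ 2 / 2)) atTop (nhds 0) := by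
  have h1 : Tendsto (fun x => P.eval x / Real.exp x) atTop (nhds 0) :=
    P.tendsto_div_exp_atTop
  have h2 : Tendsto (fun x : ℝ => Real.exp (x - x ^ 2 / 2)) atTop (nhds 0) := by
    refine Real.tendsto_exp_atBot.comp ?_
    refine tendsto_atBot_mono' atTop ?_ tendsto_neg_atTop_atBot
    filter_upwards [eventually_ge_atTop (4 : ℝ)] with x hx
    nlinarith
  have h3 := h1.mul h2
  rw [mul_zero] at h3
  refine h3.congr (fun x => ?_)
  have he : Real.exp (x - x ^ 2 / 2) = Real.exp x * Real.exp (-x ^ 2 / 2) := by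
    rw [← Real.exp_add]; ring_nf
  rw [he]
  field_simp

lemma st10_tendsto_poly_gauss_atBot (P : Polynomial ℝ) :
    Tendsto (fun x => P.eval x * Real.exp (-x ^ 2 / 2)) atBot (nhds 0) := by
  have h := (st10_tendsto_poly_gauss_atTop (P.comp (-X))).comp tendsto_neg_atBot_atTop
  refine h.congr (fun x => ?_)
  simp only [Function.comp_apply, eval_comp, eval_neg, eval_X]
  rw [neg_neg, show (-x) ^ 2 = x ^ 2 from by ring]

lemma st10_hasDerivAt_gauss (x : ℝ) :
    HasDerivAt (fun y : ℝ => Real.exp (-y ^ 2 / 2)) (-x * Real.exp (-x ^ 2 / 2)) x := by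
  have h : HasDerivAt (fun y : ℝ => -y ^ 2 / 2) (-x) x := by
    have := ((hasDerivAt_pow 2 x).neg).div_const 2
    refine this.congr_deriv ?_
    simp
    ring
  have := h.exp
  convert this using 1
  ring

lemma st10_parts (n : ℕ) :
    ∫ x : ℝ, ((n : ℝ) * x ^ (n - 1) - x ^ (n + 1)) * Real.exp (-x ^ 2 / 2) = 0 := by
  have hderiv : ∀ x : ℝ, HasDerivAt (fun y : ℝ => y ^ n * Real.exp (-y ^ 2 / 2))
      (((n : ℝ) * x ^ (n - 1) - x ^ (n + 1)) * Real.exp (-x ^ 2 / 2)) x := by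
    intro x
    have := (hasDerivAt_pow n x).mul (st10_hasDerivAt_gauss x)
    refine this.congr_deriv ?_
    ring
  have hint : Integrable
      (fun x : ℝ => ((n : ℝ) * x ^ (n - 1) - x ^ (n + 1)) * Real.exp (-x ^ 2 / 2)) := by
    have := st10_integrable_poly_exp (C (n : ℝ) * X ^ (n - 1) - X ^ (n + 1))
    refine this.congr (Eventually.of_forall fun x => ?_)
    simp
  have hbot : Tendsto (fun y : ℝ => y ^ n * Real.exp (-y ^ 2 / 2)) atBot (nhds 0) := by
    have := st10_tendsto_poly_gauss_atBot (X ^ n)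
    refine this.congr fun x => by simp
  have htop : Tendsto (fun y : ℝ => y ^ n * Real.exp (-y ^ 2 / 2)) atTop (nhds 0) := by
    have := st10_tendsto_poly_gauss_atTop (X ^ n)
    refine this.congr fun x => by simp
  have := integral_of_hasDerivAt_of_tendsto hderiv hint hbot htop
  simpa using this

lemma st10_M1 : ∫ x, x ∂(gaussianReal 0 1) = 0 := by
  rw [st10_integral_g01]
  have h0 := st10_parts 0
  have h1 : ∫ x : ℝ, -(x * Real.exp (-x ^ 2 / 2)) = 0 := by
    rw [← h0]
    refine integral_congr_ae (Eventually.of_forall fun x => ?_)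
    norm_num
  rw [integral_neg, neg_eq_zero] at h1
  calc ∫ x, gaussianPDFReal 0 1 x * x
      = ∫ x, (Real.sqrt (2 * Real.pi))⁻¹ * (x * Real.exp (-x ^ 2 / 2)) := by
        refine integral_congr_ae (Eventually.of_forall fun x => ?_)
        simp only [st10_pdf]; ring
    _ = (Real.sqrt (2 * Real.pi))⁻¹ * ∫ x, x * Real.exp (-x ^ 2 / 2) := integral_const_mul _ _
    _ = 0 := by rw [h1, mul_zero]

lemma st10_Mrec (n : ℕ) :
    ∫ x, x ^ (n + 2) ∂(gaussianReal 0 1) = ((n : ℝ) + 1) * ∫ x, x ^ n ∂(gaussianReal 0 1) := by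
  rw [st10_integral_g01, st10_integral_g01]
  have h := st10_parts (n + 1)
  have hsub : ∫ x : ℝ, (((n : ℝ) + 1) * x ^ n - x ^ (n + 2)) * Real.exp (-x ^ 2 / 2) = 0 := by
    rw [← h]
    refine integral_congr_ae (Eventually.of_forall fun x => ?_)
    push_cast
    norm_num
  have i1 : Integrable (fun x : ℝ => ((n : ℝ) + 1) * x ^ n * Real.exp (-x ^ 2 / 2)) :=
    ((st10_integrable_pow_exp n).const_mul ((n : ℝ) + 1)).congr
      (Eventually.of_forall fun x => by ring)
  have i2 := st10_integrable_pow_exp (n + 2)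
  have hsplit : ∫ x : ℝ, (((n : ℝ) + 1) * x ^ n - x ^ (n + 2)) * Real.exp (-x ^ 2 / 2)
      = (∫ x : ℝ, ((n : ℝ) + 1) * x ^ n * Real.exp (-x ^ 2 / 2))
        - ∫ x : ℝ, x ^ (n + 2) * Real.exp (-x ^ 2 / 2) := by
    rw [← integral_sub i1 i2]
    refine integral_congr_ae (Eventually.of_forall fun x => ?_)
    ring
  rw [hsplit] at hsub
  have hkey : ∫ x : ℝ, x ^ (n + 2) * Real.exp (-x ^ 2 / 2)
      = ((n : ℝ) + 1) * ∫ x : ℝ, x ^ n * Real.exp (-x ^ 2 / 2) := by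
    rw [← integral_const_mul]
    have h2 := sub_eq_zero.mp hsub
    rw [← h2]
    refine integral_congr_ae (Eventually.of_forall fun x => ?_)
    ring
  calc ∫ x, gaussianPDFReal 0 1 x * x ^ (n + 2)
      = ∫ x, (Real.sqrt (2 * Real.pi))⁻¹ * (x ^ (n + 2) * Real.exp (-x ^ 2 / 2)) := by
        refine integral_congr_ae (Eventually.of_forall fun x => ?_)
        simp only [st10_pdf]; ring
    _ = (Real.sqrt (2 * Real.pi))⁻¹ * ∫ x, x ^ (n + 2) * Real.exp (-x ^ 2 / 2) :=
        integral_const_mul _ _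
    _ = ((n : ℝ) + 1) * ((Real.sqrt (2 * Real.pi))⁻¹ * ∫ x, x ^ n * Real.exp (-x ^ 2 / 2)) := by
        rw [hkey]; ring
    _ = ((n : ℝ) + 1) * ∫ x, gaussianPDFReal 0 1 x * x ^ n := by
        rw [← integral_const_mul]
        refine congrArg _ (integral_congr_ae (Eventually.of_forall fun x => ?_))
        simp only [st10_pdf]; ring

lemma st10_stein (P : Polynomial ℝ) :
    ∫ x, x * P.eval x ∂(gaussianReal 0 1)
      = ∫ x, (derivative P).eval x ∂(gaussianReal 0 1) := by
  induction P using Polynomial.induction_on' with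
  | add p q hp hq =>
    have ip : Integrable (fun x => x * p.eval x) (gaussianReal 0 1) :=
      (st10_integrable_poly (X * p)).congr (Eventually.of_forall fun x => by simp)
    have iq : Integrable (fun x => x * q.eval x) (gaussianReal 0 1) :=
      (st10_integrable_poly (X * q)).congr (Eventually.of_forall fun x => by simp)
    have idp := st10_integrable_poly (derivative p)
    have idq := st10_integrable_poly (derivative q)
    calc ∫ x, x * (p + q).eval x ∂(gaussianReal 0 1)
        = ∫ x, (x * p.eval x + x * q.eval x) ∂(gaussianReal 0 1) := by
          refine integral_congr_ae (Eventually.of_forall fun x => ?_)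
          simp; ring
      _ = (∫ x, x * p.eval x ∂(gaussianReal 0 1)) + ∫ x, x * q.eval x ∂(gaussianReal 0 1) :=
          integral_add ip iq
      _ = (∫ x, (derivative p).eval x ∂(gaussianReal 0 1))
            + ∫ x, (derivative q).eval x ∂(gaussianReal 0 1) := by rw [hp, hq]
      _ = ∫ x, (derivative (p + q)).eval x ∂(gaussianReal 0 1) := by
          rw [← integral_add idp idq]
          refine integral_congr_ae (Eventually.of_forall fun x => ?_)
          simp
  | monomial n a =>
    rw [derivative_monomial]
    cases n with
    | zero =>
      have l : ∫ x, x * (monomial 0 a).eval x ∂(gaussianReal 0 1) = 0 := by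
        have he : (fun x : ℝ => x * (monomial 0 a).eval x) = fun x => a * x := by
          funext x; simp [mul_comm]
        rw [he, integral_const_mul, st10_M1, mul_zero]
      rw [l]
      simp
    | succ n =>
      have l : ∫ x, x * (monomial (n + 1) a).eval x ∂(gaussianReal 0 1)
          = a * ∫ x, x ^ (n + 2) ∂(gaussianReal 0 1) := by
        rw [← integral_const_mul]
        refine integral_congr_ae (Eventually.of_forall fun x => ?_)
        simp [eval_monomial]; ring
      have r : ∫ x, (monomial (n + 1 - 1) (a * ((n + 1 : ℕ) : ℝ))).eval x ∂(gaussianReal 0 1)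
          = (a * ((n : ℝ) + 1)) * ∫ x, x ^ n ∂(gaussianReal 0 1) := by
        rw [← integral_const_mul]
        refine integral_congr_ae (Eventually.of_forall fun x => ?_)
        simp only [eval_monomial]
        push_cast
        ring
      rw [l, r, st10_Mrec n]
      ring

lemma st10_int_aff (P : Polynomial ℝ) (a s : ℝ) :
    Integrable (fun y => P.eval (a + s * y)) (gaussianReal 0 1) := by
  have := st10_integrable_poly (P.comp (C a + C s * X))
  refine this.congr (Eventually.of_forall fun y => ?_)
  simp [eval_comp]

lemma st10_int_aff_mul (P : Polynomial ℝ) (a s : ℝ) :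
    Integrable (fun y => y * P.eval (a + s * y)) (gaussianReal 0 1) := by
  have := st10_integrable_poly (X * P.comp (C a + C s * X))
  refine this.congr (Eventually.of_forall fun y => ?_)
  simp [eval_comp]

lemma st10_stein' (P : Polynomial ℝ) (a s : ℝ) :
    ∫ y, y * P.eval (a + s * y) ∂(gaussianReal 0 1)
      = s * ∫ y, (derivative P).eval (a + s * y) ∂(gaussianReal 0 1) := by
  have hc : ∀ (Q : Polynomial ℝ) (y : ℝ), (Q.comp (C a + C s * X)).eval y = Q.eval (a + s * y) := by
    intro Q y; simp [eval_comp]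
  have h := st10_stein (P.comp (C a + C s * X))
  have e1 : ∫ y, y * P.eval (a + s * y) ∂(gaussianReal 0 1)
      = ∫ y, y * (P.comp (C a + C s * X)).eval y ∂(gaussianReal 0 1) := by
    refine integral_congr_ae (Eventually.of_forall fun y => ?_)
    show y * P.eval (a + s * y) = y * (P.comp (C a + C s * X)).eval y
    rw [hc]
  rw [e1, h]
  have hd : derivative (P.comp (C a + C s * X)) = C s * (derivative P).comp (C a + C s * X) := by
    have hq : derivative (C a + C s * X) = C s := by simp
    rw [derivative_comp, hq]
  rw [hd, ← integral_const_mul]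
  refine integral_congr_ae (Eventually.of_forall fun y => ?_)
  show ((C s * (derivative P).comp (C a + C s * X)).eval y) = s * (derivative P).eval (a + s * y)
  rw [eval_mul, eval_C, hc]

lemma st10_inner (ρ σ : ℝ) (hρσ : ρ ^ 2 + σ ^ 2 = 1) (n : ℕ) (x : ℝ) :
    ∫ y, (st10H n).eval (ρ * x + σ * y) ∂(gaussianReal 0 1)
      = ρ ^ n * (st10H n).eval x := by
  induction n using Nat.strong_induction_on generalizing x with
  | _ n ih =>
    match n with
    | 0 => simp [st10H_zero]
    | 1 =>
      simp only [st10H_one, eval_X]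
      have i2 : Integrable (fun y => σ * y) (gaussianReal 0 1) :=
        (st10_integrable_poly (C σ * X)).congr (Eventually.of_forall fun y => by simp)
      have e1 : ∫ y, σ * y ∂(gaussianReal 0 1) = 0 := by
        rw [integral_const_mul, st10_M1, mul_zero]
      rw [integral_add (integrable_const (ρ * x)) i2, e1, integral_const]
      simp
    | (m + 2) =>
      have h0 := ih m (by omega)
      have h1 := ih (m + 1) (by omega)
      rw [st10H_succ_succ m]
      have expand : ∀ y : ℝ, (X * st10H (m + 1) - C ((m : ℝ) + 1) * st10H m).eval (ρ * x + σ * y)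
          = ρ * x * (st10H (m + 1)).eval (ρ * x + σ * y)
            + σ * (y * (st10H (m + 1)).eval (ρ * x + σ * y))
            - ((m : ℝ) + 1) * (st10H m).eval (ρ * x + σ * y) := by
        intro y
        simp only [eval_sub, eval_mul, eval_X, eval_C]
        ring
      have iA := (st10_int_aff (st10H (m + 1)) (ρ * x) σ).const_mul (ρ * x)
      have iB := (st10_int_aff_mul (st10H (m + 1)) (ρ * x) σ).const_mul σ
      have iC := (st10_int_aff (st10H m) (ρ * x) σ).const_mul ((m : ℝ) + 1)
      calc ∫ y, (X * st10H (m + 1) - C ((m : ℝ) + 1) * st10H m).eval (ρ * x + σ * y)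
              ∂(gaussianReal 0 1)
          = ∫ y, (ρ * x * (st10H (m + 1)).eval (ρ * x + σ * y)
              + σ * (y * (st10H (m + 1)).eval (ρ * x + σ * y))
              - ((m : ℝ) + 1) * (st10H m).eval (ρ * x + σ * y)) ∂(gaussianReal 0 1) :=
            by
              refine integral_congr_ae (Eventually.of_forall fun y => ?_)
              exact expand y
        _ = ((∫ y, ρ * x * (st10H (m + 1)).eval (ρ * x + σ * y) ∂(gaussianReal 0 1))
              + ∫ y, σ * (y * (st10H (m + 1)).eval (ρ * x + σ * y)) ∂(gaussianReal 0 1))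
              - ∫ y, ((m : ℝ) + 1) * (st10H m).eval (ρ * x + σ * y) ∂(gaussianReal 0 1) := by
            have hAB : Integrable (fun y => ρ * x * (st10H (m + 1)).eval (ρ * x + σ * y)
                + σ * (y * (st10H (m + 1)).eval (ρ * x + σ * y))) (gaussianReal 0 1) :=
              (iA.add iB).congr (Eventually.of_forall fun y => rfl)
            rw [integral_sub hAB iC, integral_add iA iB]
        _ = ρ * x * (ρ ^ (m + 1) * (st10H (m + 1)).eval x)
              + σ * (σ * (((m : ℝ) + 1) * (ρ ^ m * (st10H m).eval x)))
              - ((m : ℝ) + 1) * (ρ ^ m * (st10H m).eval x) := by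
            rw [integral_const_mul, integral_const_mul, integral_const_mul, h1 x, h0 x,
              st10_stein' (st10H (m + 1)) (ρ * x) σ, st10H_deriv m]
            have : ∫ y, (C ((m : ℝ) + 1) * st10H m).eval (ρ * x + σ * y) ∂(gaussianReal 0 1)
                = ((m : ℝ) + 1) * ∫ y, (st10H m).eval (ρ * x + σ * y) ∂(gaussianReal 0 1) := by
              rw [← integral_const_mul]
              exact integral_congr_ae (Eventually.of_forall fun y => by simp)
            rw [this, h0 x]
        _ = ρ ^ (m + 2) * (X * st10H (m + 1) - C ((m : ℝ) + 1) * st10H m).eval x := by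
            simp only [eval_sub, eval_mul, eval_X, eval_C]
            linear_combination (((m : ℝ) + 1) * ρ ^ m * (st10H m).eval x) * hρσ

lemma st10_tail (j : ℕ) (b : ℝ) :
    ∫ a, (if b ≤ a then (st10H (j + 1)).eval a else 0) ∂(gaussianReal 0 1)
      = (Real.sqrt (2 * Real.pi))⁻¹ * ((st10H j).eval b * Real.exp (-b ^ 2 / 2)) := by
  rw [st10_integral_g01]
  have step1 : ∫ x, gaussianPDFReal 0 1 x * (if b ≤ x then (st10H (j + 1)).eval x else 0)
      = ∫ x, (Real.sqrt (2 * Real.pi))⁻¹ *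
          Set.indicator (Set.Ici b) (fun y => (st10H (j + 1)).eval y * Real.exp (-y ^ 2 / 2)) x := by
    refine integral_congr_ae (Eventually.of_forall fun x => ?_)
    simp only [st10_pdf, Set.indicator_apply, Set.mem_Ici]
    split_ifs <;> ring
  rw [step1, integral_const_mul, integral_indicator measurableSet_Ici,
    integral_Ici_eq_integral_Ioi]
  have hderiv : ∀ x ∈ Set.Ici b,
      HasDerivAt (fun y => -((st10H j).eval y * Real.exp (-y ^ 2 / 2)))
        ((st10H (j + 1)).eval x * Real.exp (-x ^ 2 / 2)) x := by
    intro x _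
    have h1 := (((st10H j).hasDerivAt x).mul (st10_hasDerivAt_gauss x)).neg
    refine h1.congr_deriv ?_
    rw [st10H_succ j]
    simp only [eval_sub, eval_mul, eval_X]
    ring
  have hint : IntegrableOn (fun x => (st10H (j + 1)).eval x * Real.exp (-x ^ 2 / 2))
      (Set.Ioi b) := (st10_integrable_poly_exp (st10H (j + 1))).integrableOn
  have htend : Tendsto (fun y => -((st10H j).eval y * Real.exp (-y ^ 2 / 2))) atTop (nhds 0) := by
    simpa using (st10_tendsto_poly_gauss_atTop (st10H j)).neg
  have hftc := integral_Ioi_of_hasDerivAt_of_tendsto' hderiv hint htend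
  rw [hftc]
  ring

lemma st10_fd (m : ℕ) : m ! = Nat.doubleFactorial m * Nat.doubleFactorial (m - 1) := by
  cases m with
  | zero => rfl
  | succ k => simpa using Nat.factorial_eq_mul_doubleFactorial k

lemma st10_nat (n s : ℕ) :
    Nat.doubleFactorial (2 * n - 1) * ((2 * n + (2 * s + 1)).choose (2 * s + 1))
        * Nat.doubleFactorial (2 * s + 1)
      = Nat.doubleFactorial (2 * n + 2 * s + 1) * (n + s).choose s := by
  have hD : 0 < Nat.doubleFactorial (2 * n) * Nat.doubleFactorial (2 * s) :=
    Nat.mul_pos (Nat.doubleFactorial_pos _) (Nat.doubleFactorial_pos _)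
  refine Nat.eq_of_mul_eq_mul_right hD ?_
  have h1 : (2 * n)! = Nat.doubleFactorial (2 * n) * Nat.doubleFactorial (2 * n - 1) :=
    st10_fd (2 * n)
  have h2 : (2 * s + 1)! = Nat.doubleFactorial (2 * s + 1) * Nat.doubleFactorial (2 * s) := by
    simpa using st10_fd (2 * s + 1)
  have h3 := Nat.choose_mul_factorial_mul_factorial (Nat.le_add_left (2 * s + 1) (2 * n))
  rw [Nat.add_sub_cancel] at h3
  have h4 := Nat.choose_mul_factorial_mul_factorial (Nat.le_add_left s n)
  rw [Nat.add_sub_cancel] at h4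
  have h5 : Nat.doubleFactorial (2 * (n + s)) = 2 ^ (n + s) * (n + s)! :=
    Nat.doubleFactorial_two_mul (n + s)
  have h6 : Nat.doubleFactorial (2 * n) = 2 ^ n * n ! := Nat.doubleFactorial_two_mul n
  have h7 : Nat.doubleFactorial (2 * s) = 2 ^ s * s ! := Nat.doubleFactorial_two_mul s
  have h8 : (2 * n + 2 * s + 1)! = Nat.doubleFactorial (2 * n + 2 * s + 1)
      * Nat.doubleFactorial (2 * n + 2 * s) := by
    simpa using st10_fd (2 * n + 2 * s + 1)
  calc Nat.doubleFactorial (2 * n - 1) * ((2 * n + (2 * s + 1)).choose (2 * s + 1))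
          * Nat.doubleFactorial (2 * s + 1)
          * (Nat.doubleFactorial (2 * n) * Nat.doubleFactorial (2 * s))
      = (2 * n + (2 * s + 1)).choose (2 * s + 1) * (2 * s + 1)! * (2 * n)! := by
        rw [h1, h2]; ring
    _ = (2 * n + (2 * s + 1))! := h3
    _ = (2 * n + 2 * s + 1)! := by rw [← add_assoc]
    _ = Nat.doubleFactorial (2 * n + 2 * s + 1) * Nat.doubleFactorial (2 * (n + s)) := by
        rw [h8, show 2 * (n + s) = 2 * n + 2 * s from by ring]
    _ = Nat.doubleFactorial (2 * n + 2 * s + 1) * (2 ^ (n + s) * ((n + s).choose s * s ! * n !)) := by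
        rw [h5, h4]
    _ = (Nat.doubleFactorial (2 * n + 2 * s + 1) * (n + s).choose s)
          * ((2 ^ n * n !) * (2 ^ s * s !)) := by ring
    _ = Nat.doubleFactorial (2 * n + 2 * s + 1) * (n + s).choose s
          * (Nat.doubleFactorial (2 * n) * Nat.doubleFactorial (2 * s)) := by rw [← h6, ← h7]

lemma st10_coeff_sum (i : ℕ) (hi : Even i) (hipos : 0 < i) (b : ℝ) :
    (st10H (i - 1)).eval b
      = (Nat.doubleFactorial (i - 1) : ℝ)
        * (∑ r ∈ Finset.range i, if Odd r then
            ((-1 : ℝ) ^ ((i - r - 1) / 2) / (Nat.doubleFactorial r : ℝ))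
              * ((i / 2 - 1).choose ((r - 1) / 2) : ℝ) * b ^ r
          else 0) := by
  have hdeg : (st10H (i - 1)).natDegree < i := by
    have h1 : (st10H (i - 1)).natDegree ≤ (hermite (i - 1)).natDegree :=
      Polynomial.natDegree_map_le
    rw [natDegree_hermite] at h1
    omega
  rw [Polynomial.eval_eq_sum_range' hdeg, Finset.mul_sum]
  refine Finset.sum_congr rfl fun r hr => ?_
  rw [Finset.mem_range] at hr
  rw [st10H, Polynomial.coeff_map, algebraMap_int_eq]
  obtain ⟨m, hm⟩ := hi
  by_cases ho : Odd r
  · rw [if_pos ho]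
    obtain ⟨s, hs⟩ := ho
    set n := (i - r - 1) / 2 with hn
    have e1 : i - 1 = 2 * n + r := by omega
    have e2 : (r - 1) / 2 = s := by omega
    rw [e1, coeff_hermite_explicit n r, e2]
    have hnat := st10_nat n s
    have hb1 : 2 * s + 1 = r := by omega
    have hc2 : 2 * n + 2 * s + 1 = 2 * n + r := by omega
    rw [hb1, hc2] at hnat
    have he3 : n + s = i / 2 - 1 := by omega
    rw [he3] at hnat
    have hr2 : (Nat.doubleFactorial r : ℝ) ≠ 0 := by
      exact_mod_cast (Nat.doubleFactorial_pos r).ne'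
    have hnatR : ((2 * n - 1).doubleFactorial : ℝ) * ((2 * n + r).choose r : ℝ)
        * (Nat.doubleFactorial r : ℝ)
        = ((2 * n + r).doubleFactorial : ℝ) * ((i / 2 - 1).choose s : ℝ) := by
      exact_mod_cast hnat
    simp only [eq_intCast]
    push_cast
    field_simp
    linear_combination (b ^ r) * hnatR
  · rw [if_neg ho]
    have hodd : Odd ((i - 1) + r) := by
      have h1 : i % 2 = 0 := Nat.even_iff.mp ⟨m, hm⟩
      have h2 : r % 2 = 0 := Nat.even_iff.mp (Nat.not_odd_iff_even.mp ho)
      exact Nat.odd_iff.mpr (by omega)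
    rw [coeff_hermite_of_odd_add hodd]
    simp

/-- for even i > 0, 0 < C ≤ 1, x₁ ∈ [0, C] and independent standard
Gaussians α, β, E[h_i((α x₁ + β √(C² − x₁²))/C) 1{α ≥ b}] = q_i x₁^i with the explicit
coefficient q_i, where h_i is the degree-i probabilists' Hermite polynomial. -/
theorem stmt_10 (C : ℝ) (hC0 : 0 < C) (hC1 : C ≤ 1)
    (i : ℕ) (hi : Even i) (hipos : 0 < i)
    (b x1 : ℝ) (hx1 : x1 ∈ Set.Icc (0 : ℝ) C) :
    (∫ p : ℝ × ℝ,
        (if b ≤ p.1 then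
          (Polynomial.aeval ((p.1 * x1 + p.2 * Real.sqrt (C ^ 2 - x1 ^ 2)) / C)
            (Polynomial.hermite i) : ℝ)
        else 0)
      ∂((gaussianReal 0 1).prod (gaussianReal 0 1)))
    = ((Nat.doubleFactorial (i - 1) : ℝ) * Real.exp (-b ^ 2 / 2)
          / (C ^ i * Real.sqrt (2 * Real.pi)))
        * (∑ r ∈ Finset.range i, if Odd r then
            ((-1 : ℝ) ^ ((i - r - 1) / 2) / (Nat.doubleFactorial r : ℝ))
              * ((i / 2 - 1).choose ((r - 1) / 2) : ℝ) * b ^ r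
          else 0)
        * x1 ^ i := by
  obtain ⟨hx0, hxC⟩ := hx1
  have hC : C ≠ 0 := ne_of_gt hC0
  set ρ : ℝ := x1 / C with hρ
  set σ : ℝ := Real.sqrt (C ^ 2 - x1 ^ 2) / C with hσ
  have hnn : 0 ≤ C ^ 2 - x1 ^ 2 := by nlinarith
  have hsq : Real.sqrt (C ^ 2 - x1 ^ 2) ^ 2 = C ^ 2 - x1 ^ 2 := Real.sq_sqrt hnn
  have hρσ : ρ ^ 2 + σ ^ 2 = 1 := by
    rw [hρ, hσ, div_pow, div_pow, hsq]
    field_simp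
    ring
  have harg : ∀ p : ℝ × ℝ,
      (p.1 * x1 + p.2 * Real.sqrt (C ^ 2 - x1 ^ 2)) / C = ρ * p.1 + σ * p.2 := by
    intro p
    rw [hρ, hσ]
    field_simp
  set F : ℝ × ℝ → ℝ := fun p => if b ≤ p.1 then (st10H i).eval (ρ * p.1 + σ * p.2) else 0
    with hF
  have step0 : (∫ p : ℝ × ℝ,
        (if b ≤ p.1 then
          (Polynomial.aeval ((p.1 * x1 + p.2 * Real.sqrt (C ^ 2 - x1 ^ 2)) / C)
            (Polynomial.hermite i) : ℝ)
        else 0)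
      ∂((gaussianReal 0 1).prod (gaussianReal 0 1)))
      = ∫ p, F p ∂((gaussianReal 0 1).prod (gaussianReal 0 1)) := by
    refine integral_congr_ae (Eventually.of_forall fun p => ?_)
    rw [hF]
    simp only [harg p, st10H_eval]
  rw [step0]
  -- integrability on the product
  set N : ℕ := (st10H i).natDegree with hN
  have intg1 : ∀ k : ℕ, Integrable (Set.indicator (Set.Ici b) (fun a : ℝ => a ^ k))
      (gaussianReal 0 1) := by
    intro k
    refine Integrable.indicator ?_ measurableSet_Ici
    exact (st10_integrable_poly (X ^ k)).congr (Eventually.of_forall fun a => by simp)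
  have intg2 : ∀ k : ℕ, Integrable (fun a : ℝ => a ^ k) (gaussianReal 0 1) := fun k =>
    (st10_integrable_poly (X ^ k)).congr (Eventually.of_forall fun a => by simp)
  have hFeq : F = fun p : ℝ × ℝ => ∑ j ∈ Finset.range (N + 1), ∑ k ∈ Finset.range (j + 1),
      ((st10H i).coeff j * (j.choose k) * ρ ^ k * σ ^ (j - k))
        * ((Set.indicator (Set.Ici b) (fun a : ℝ => a ^ k)) p.1 * p.2 ^ (j - k)) := by
    funext p
    by_cases hb : b ≤ p.1
    · simp only [hF, if_pos hb]
      rw [Polynomial.eval_eq_sum_range' (Nat.lt_succ_of_le hN.ge)]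
      refine Finset.sum_congr rfl fun j hj => ?_
      rw [add_pow, Finset.mul_sum]
      refine Finset.sum_congr rfl fun k hk => ?_
      rw [Set.indicator_of_mem (Set.mem_Ici.mpr hb)]
      rw [mul_pow, mul_pow]
      ring
    · simp only [hF, if_neg hb]
      have hz : ∀ k : ℕ, (Set.Ici b).indicator (fun a : ℝ => a ^ k) p.1 = 0 := fun k =>
        Set.indicator_of_notMem (fun h => hb (Set.mem_Ici.mp h)) _
      simp only [hz, zero_mul, mul_zero, Finset.sum_const_zero]
  have hFint : Integrable F ((gaussianReal 0 1).prod (gaussianReal 0 1)) := by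
    rw [hFeq]
    refine integrable_finset_sum _ fun j _ => integrable_finset_sum _ fun k _ => ?_
    exact (((intg1 k).mul_prod (intg2 (j - k)))).const_mul _
  rw [MeasureTheory.integral_prod F hFint]
  have inner : ∀ a : ℝ, (∫ c, F (a, c) ∂(gaussianReal 0 1))
      = if b ≤ a then ρ ^ i * (st10H i).eval a else 0 := by
    intro a
    by_cases hb : b ≤ a
    · rw [if_pos hb]
      have : (fun c => F (a, c)) = fun c => (st10H i).eval (ρ * a + σ * c) := by
        funext c; rw [hF]; simp [hb]
      rw [this]
      exact st10_inner ρ σ hρσ i a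
    · rw [if_neg hb]
      have : (fun c => F (a, c)) = fun _ => (0 : ℝ) := by
        funext c; rw [hF]; simp [hb]
      rw [this, integral_zero]
  have step2 : ∫ a, (∫ c, F (a, c) ∂(gaussianReal 0 1)) ∂(gaussianReal 0 1)
      = ρ ^ i * ∫ a, (if b ≤ a then (st10H i).eval a else 0) ∂(gaussianReal 0 1) := by
    rw [← integral_const_mul]
    refine integral_congr_ae (Eventually.of_forall fun a => ?_)
    show (∫ c, F (a, c) ∂(gaussianReal 0 1))
      = ρ ^ i * if b ≤ a then (st10H i).eval a else 0
    rw [inner a, mul_ite, mul_zero]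
  rw [step2]
  have hi1 : i - 1 + 1 = i := by omega
  have tail := st10_tail (i - 1) b
  rw [hi1] at tail
  rw [tail, st10_coeff_sum i hi hipos b]
  have hsqrt : Real.sqrt (2 * Real.pi) ≠ 0 := by
    positivity
  rw [hρ, div_pow]
  field_simp
end

section
/- Fix positive integers m, d, reals ε_a > 0, σ_wb > 0, τ > 0, constants c₁ > 10, c₂ > 10, c₈ > 0, and arbitrary fixed vectors w⁰_r ∈ ℝ^d and reals b⁰_r for r ∈ [m]. Let a_1, …, a_m be independent, each distributed as the absolute value of an N(0, ε_a²) random variable. For parameters θ = (w_r, b_r)_{r=1}^m define the linear part of the pseudo-network P_ℓ(x; θ) = τ Σ_{r=1}^m a_r · tanh'(⟨w⁰_r, x⟩ + b⁰_r) · (⟨w_r, x⟩ + b_r), and let ‖θ‖_{2,1} = Σ_{r=1}^m sqrt(‖w_r‖₂² + b_r²). If ‖θ‖_{2,1} ≤ 1 / ( 12 c₁ c₂ ε_a σ_wb τ m^{c₈} sqrt( log m · log(m d) ) ), then with probability at least 1 − 1/c₁ over the draw of a_1, …, a_m, for every x ∈ ℝ^d with ‖x‖₂ ≤ 1, |P_ℓ(x;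 θ)| ≤ 1 / ( 3 sqrt(2) c₂ σ_wb m^{c₈} sqrt( log(m d) ) ). -/
open MeasureTheory ProbabilityTheory
open scoped NNReal

lemma aux_abs_deriv_tanh (u : ℝ) : |deriv Real.tanh u| ≤ 1 := by
  have h : Real.tanh = fun x => Real.sinh x / Real.cosh x :=
    funext Real.tanh_eq_sinh_div_cosh
  have hd : HasDerivAt Real.tanh
      ((Real.cosh u * Real.cosh u - Real.sinh u * Real.sinh u) / (Real.cosh u) ^ 2) u := by
    rw [h]
    exact (Real.hasDerivAt_sinh u).div (Real.hasDerivAt_cosh u) (ne_of_gt (Real.cosh_pos u))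
  rw [hd.deriv]
  have h1 : Real.cosh u * Real.cosh u - Real.sinh u * Real.sinh u = 1 := by
    have := Real.cosh_sq_sub_sinh_sq u; nlinarith
  rw [h1]
  have h2 : (1:ℝ) ≤ Real.cosh u ^ 2 := by nlinarith [Real.one_le_cosh u]
  rw [abs_of_nonneg (by positivity), div_le_one (by positivity)]
  exact h2

lemma aux_cs {d : ℕ} (w x : Fin d → ℝ) (b : ℝ) (hx : Real.sqrt (∑ j, (x j) ^ 2) ≤ 1) :
    |(∑ j, w j * x j) + b| ≤ Real.sqrt 2 * Real.sqrt ((∑ j, (w j) ^ 2) + b ^ 2) := by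
  have hW0 : (0:ℝ) ≤ ∑ j, (w j) ^ 2 := Finset.sum_nonneg fun _ _ => sq_nonneg _
  have hX0 : (0:ℝ) ≤ ∑ j, (x j) ^ 2 := Finset.sum_nonneg fun _ _ => sq_nonneg _
  have hX1 : (∑ j, (x j) ^ 2) ≤ 1 := by
    nlinarith [Real.sq_sqrt hX0, Real.sqrt_nonneg (∑ j, (x j) ^ 2)]
  have hcs : (∑ j, w j * x j) ^ 2 ≤ (∑ j, (w j) ^ 2) * (∑ j, (x j) ^ 2) :=
    Finset.sum_mul_sq_le_sq_mul_sq _ _ _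
  have hsq : ((∑ j, w j * x j) + b) ^ 2 ≤ 2 * ((∑ j, (w j) ^ 2) + b ^ 2) := by
    nlinarith [sq_nonneg ((∑ j, w j * x j) - b)]
  calc |(∑ j, w j * x j) + b| ≤ Real.sqrt (2 * ((∑ j, (w j) ^ 2) + b ^ 2)) :=
        Real.abs_le_sqrt hsq
    _ = Real.sqrt 2 * Real.sqrt ((∑ j, (w j) ^ 2) + b ^ 2) := Real.sqrt_mul (by norm_num) _

lemma aux_tail (v : ℝ≥0) (hv : v ≠ 0) (K : ℝ) (hK : 0 ≤ K) :
    gaussianReal 0 v {x : ℝ | K < |x|}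
      ≤ ENNReal.ofReal (Real.sqrt 2 * Real.exp (-K ^ 2 / (4 * v))) := by
  have hv0 : (0:ℝ) < v := by positivity
  have hS : MeasurableSet {x : ℝ | K < |x|} :=
    measurableSet_lt measurable_const measurable_abs
  set C : ℝ := (Real.sqrt (2 * Real.pi * v))⁻¹ * Real.exp (-K ^ 2 / (4 * v)) with hC
  have hC0 : 0 ≤ C := by positivity
  have hb0 : (0:ℝ) < 1 / (4 * v) := by positivity
  have gint : Integrable (fun x : ℝ => C * Real.exp (-(1 / (4 * (v:ℝ))) * x ^ 2)) :=
    (integrable_exp_neg_mul_sq hb0).const_mul C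
  rw [gaussianReal_apply_eq_integral 0 hv]
  apply ENNReal.ofReal_le_ofReal
  have key : ∀ x ∈ {x : ℝ | K < |x|}, gaussianPDFReal 0 v x
      ≤ C * Real.exp (-(1 / (4 * (v:ℝ))) * x ^ 2) := by
    intro x hx
    have hx2 : K ^ 2 ≤ x ^ 2 := by
      have h : K < |x| := hx
      nlinarith [abs_nonneg x, sq_abs x]
    have hexp : Real.exp (-(x - 0) ^ 2 / (2 * (v:ℝ)))
        ≤ Real.exp (-K ^ 2 / (4 * (v:ℝ))) * Real.exp (-(1 / (4 * (v:ℝ))) * x ^ 2) := by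
      rw [← Real.exp_add]
      apply Real.exp_le_exp.mpr
      rw [sub_zero]
      have harr : -K ^ 2 / (4 * (v:ℝ)) + -(1 / (4 * (v:ℝ))) * x ^ 2
          = (-K ^ 2 - x ^ 2) / (4 * (v:ℝ)) := by ring
      rw [harr, div_le_div_iff₀ (by positivity) (by positivity)]
      nlinarith
    calc gaussianPDFReal 0 v x
        = (Real.sqrt (2 * Real.pi * v))⁻¹ * Real.exp (-(x - 0) ^ 2 / (2 * (v:ℝ))) := rfl
      _ ≤ (Real.sqrt (2 * Real.pi * v))⁻¹
            * (Real.exp (-K ^ 2 / (4 * (v:ℝ))) * Real.exp (-(1 / (4 * (v:ℝ))) * x ^ 2)) :=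
          mul_le_mul_of_nonneg_left hexp (by positivity)
      _ = C * Real.exp (-(1 / (4 * (v:ℝ))) * x ^ 2) := by rw [hC]; ring
  calc ∫ x in {x : ℝ | K < |x|}, gaussianPDFReal 0 v x
      ≤ ∫ x in {x : ℝ | K < |x|}, C * Real.exp (-(1 / (4 * (v:ℝ))) * x ^ 2) :=
        setIntegral_mono_on (integrable_gaussianPDFReal 0 v).integrableOn
          gint.integrableOn hS key
    _ ≤ ∫ x : ℝ, C * Real.exp (-(1 / (4 * (v:ℝ))) * x ^ 2) :=
        setIntegral_le_integral gint (Filter.Eventually.of_forall fun x => by positivity)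
    _ = C * Real.sqrt (Real.pi / (1 / (4 * v))) := by
        rw [integral_const_mul, integral_gaussian]
    _ = Real.sqrt 2 * Real.exp (-K ^ 2 / (4 * v)) := by
        rw [hC]
        have h1 : Real.pi / (1 / (4 * (v:ℝ))) = 2 * (2 * Real.pi * v) := by field_simp; ring
        rw [h1, Real.sqrt_mul (by norm_num : (0:ℝ) ≤ 2)]
        have h2 : Real.sqrt (2 * Real.pi * v) ≠ 0 := by positivity
        field_simp

set_option maxHeartbeats 1600000 in
/-- if the (2,1)-norm of the trainable offsets θ is at most
1/(12 c₁ c₂ ε_a σ_wb τ m^{c₈} √(log m · log(md))), then with probability at least 1 − 1/c₁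
over the half-normal outer weights a_r = |N(0, ε_a²)|, the linear part of the pseudo-network
P_ℓ(x; θ) = τ Σ_r a_r tanh'(⟨w⁰_r, x⟩ + b⁰_r)(⟨w_r, x⟩ + b_r) is uniformly bounded by
1/(3 √2 c₂ σ_wb m^{c₈} √(log(md))) over all inputs of norm at most 1. -/
theorem stmt_15 {Ω : Type*} [MeasurableSpace Ω] (μ : Measure Ω) [IsProbabilityMeasure μ]
    (m d : ℕ) (hm : 0 < m) (hd : 0 < d)
    (εa : ℝ≥0) (hεa : 0 < εa) (σwb τ : ℝ) (hσwb : 0 < σwb) (hτ : 0 < τ)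
    (c1 c2 c8 : ℝ) (hc1 : 10 < c1) (hc2 : 10 < c2) (hc8 : 0 < c8)
    (w0 : Fin m → Fin d → ℝ) (b0 : Fin m → ℝ)
    (a : Fin m → Ω → ℝ) (hmeas : ∀ r, Measurable (a r))
    (hindep : iIndepFun a μ)
    (hdist : ∀ r, Measure.map (a r) μ
      = Measure.map (fun x : ℝ => |x|) (gaussianReal 0 (εa ^ 2)))
    (w : Fin m → Fin d → ℝ) (b : Fin m → ℝ)
    (hθ : ∑ r, Real.sqrt ((∑ j, (w r j) ^ 2) + (b r) ^ 2)
      ≤ 1 / (12 * c1 * c2 * (εa : ℝ) * σwb * τ * (m : ℝ) ^ c8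
              * Real.sqrt (Real.log m * Real.log (m * d)))) :
    ENNReal.ofReal (1 - 1 / c1) ≤
      μ {ω | ∀ x : Fin d → ℝ, Real.sqrt (∑ j, (x j) ^ 2) ≤ 1 →
        |τ * ∑ r, a r ω * deriv Real.tanh ((∑ j, w0 r j * x j) + b0 r)
            * ((∑ j, w r j * x j) + b r)|
          ≤ 1 / (3 * Real.sqrt 2 * c2 * σwb * (m : ℝ) ^ c8
              * Real.sqrt (Real.log (m * d)))} := by
  have hc1' : (0:ℝ) < c1 := by linarith
  have hεa' : (0:ℝ) < (εa:ℝ) := hεa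
  rcases (by omega : m = 1 ∨ 2 ≤ m) with hm1 | hm2
  · -- degenerate case m = 1 : the constraint forces θ = 0
    subst hm1
    simp only [Nat.cast_one, Real.log_one, zero_mul, Real.sqrt_zero, mul_zero, div_zero] at hθ
    have hall : ∀ r, Real.sqrt ((∑ j, (w r j) ^ 2) + (b r) ^ 2) = 0 := fun r =>
      (Finset.sum_eq_zero_iff_of_nonneg (fun i _ => Real.sqrt_nonneg _)).mp
        (le_antisymm hθ (Finset.sum_nonneg fun i _ => Real.sqrt_nonneg _)) r (Finset.mem_univ r)
    have hzero : ∀ (r) (x : Fin d → ℝ), (∑ j, w r j * x j) + b r = 0 := by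
      intro r x
      have h0 := hall r
      have hW0 : (0:ℝ) ≤ ∑ j, (w r j) ^ 2 := Finset.sum_nonneg fun _ _ => sq_nonneg _
      have hle : (∑ j, (w r j) ^ 2) + (b r) ^ 2 ≤ 0 := Real.sqrt_eq_zero'.mp h0
      have hb : b r = 0 := by nlinarith [sq_nonneg (b r)]
      have hWz : ∑ j, (w r j) ^ 2 = 0 := by nlinarith [sq_nonneg (b r)]
      have hw : ∀ j, w r j = 0 := by
        intro j
        have h := (Finset.sum_eq_zero_iff_of_nonneg (fun i _ => sq_nonneg (w r i))).mp hWz j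
          (Finset.mem_univ j)
        exact pow_eq_zero_iff (by norm_num) |>.mp h
      rw [hb, Finset.sum_eq_zero fun j _ => by rw [hw j, zero_mul], add_zero]
    have hmem : ∀ ω : Ω, ∀ x : Fin d → ℝ, Real.sqrt (∑ j, (x j) ^ 2) ≤ 1 →
        |τ * ∑ r, a r ω * deriv Real.tanh ((∑ j, w0 r j * x j) + b0 r)
            * ((∑ j, w r j * x j) + b r)|
          ≤ 1 / (3 * Real.sqrt 2 * c2 * σwb * ((1:ℕ) : ℝ) ^ c8
              * Real.sqrt (Real.log ((1:ℕ) * (d:ℝ)))) := by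
      intro ω x hx
      have hz : ∑ r, a r ω * deriv Real.tanh ((∑ j, w0 r j * x j) + b0 r)
          * ((∑ j, w r j * x j) + b r) = 0 :=
        Finset.sum_eq_zero fun r _ => by rw [hzero r x, mul_zero]
      rw [hz, mul_zero, abs_zero]
      positivity
    calc ENNReal.ofReal (1 - 1 / c1)
        ≤ 1 := ENNReal.ofReal_le_one.mpr (by nlinarith [one_div_pos.mpr hc1'])
      _ = μ Set.univ := measure_univ.symm
      _ ≤ _ := measure_mono fun ω _ => hmem ω
  · -- main case m ≥ 2
    have hm2' : (2:ℝ) ≤ (m:ℝ) := by exact_mod_cast hm2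
    have hd1 : (1:ℝ) ≤ (d:ℝ) := by exact_mod_cast hd
    have hLm : 0 < Real.log m := Real.log_pos (by linarith)
    have hLmd : 0 < Real.log ((m:ℝ) * d) := Real.log_pos (by nlinarith)
    set K : ℝ := 2 * c1 * (εa:ℝ) * Real.sqrt (Real.log m) with hKdef
    have hK0 : 0 ≤ K := by positivity
    set G : Set Ω := {ω | ∀ r, |a r ω| ≤ K} with hG
    have hGmeas : MeasurableSet G := by
      have h : G = ⋂ r, (a r) ⁻¹' {y : ℝ | |y| ≤ K} := by
        ext ω; simp [hG, Set.mem_iInter]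
      rw [h]
      exact MeasurableSet.iInter fun r =>
        (hmeas r) (measurableSet_le measurable_abs measurable_const)
    -- deterministic part
    have hsub : G ⊆ {ω : Ω | ∀ x : Fin d → ℝ, Real.sqrt (∑ j, (x j) ^ 2) ≤ 1 →
        |τ * ∑ r, a r ω * deriv Real.tanh ((∑ j, w0 r j * x j) + b0 r)
            * ((∑ j, w r j * x j) + b r)|
          ≤ 1 / (3 * Real.sqrt 2 * c2 * σwb * (m : ℝ) ^ c8
              * Real.sqrt (Real.log (m * d)))} := by
      intro ω hω x hx
      have hterm : ∀ r ∈ Finset.univ, |a r ω * deriv Real.tanh ((∑ j, w0 r j * x j) + b0 r)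
            * ((∑ j, w r j * x j) + b r)|
          ≤ K * (Real.sqrt 2 * Real.sqrt ((∑ j, (w r j) ^ 2) + (b r) ^ 2)) := by
        intro r _
        rw [abs_mul, abs_mul]
        have h1 : |a r ω| ≤ K := hω r
        have h2 : |deriv Real.tanh ((∑ j, w0 r j * x j) + b0 r)| ≤ 1 := aux_abs_deriv_tanh _
        have h3 := aux_cs (w r) x (b r) hx
        calc |a r ω| * |deriv Real.tanh ((∑ j, w0 r j * x j) + b0 r)|
              * |(∑ j, w r j * x j) + b r|
            ≤ (K * 1) * (Real.sqrt 2 * Real.sqrt ((∑ j, (w r j) ^ 2) + (b r) ^ 2)) :=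
              mul_le_mul (mul_le_mul h1 h2 (abs_nonneg _) hK0) h3 (abs_nonneg _) (by positivity)
          _ = K * (Real.sqrt 2 * Real.sqrt ((∑ j, (w r j) ^ 2) + (b r) ^ 2)) := by ring
      have hsum : |∑ r, a r ω * deriv Real.tanh ((∑ j, w0 r j * x j) + b0 r)
            * ((∑ j, w r j * x j) + b r)|
          ≤ K * Real.sqrt 2 * ∑ r, Real.sqrt ((∑ j, (w r j) ^ 2) + (b r) ^ 2) := by
        calc |∑ r, a r ω * deriv Real.tanh ((∑ j, w0 r j * x j) + b0 r)
              * ((∑ j, w r j * x j) + b r)|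
            ≤ ∑ r, |a r ω * deriv Real.tanh ((∑ j, w0 r j * x j) + b0 r)
              * ((∑ j, w r j * x j) + b r)| := Finset.abs_sum_le_sum_abs _ _
          _ ≤ ∑ r, K * (Real.sqrt 2 * Real.sqrt ((∑ j, (w r j) ^ 2) + (b r) ^ 2)) :=
              Finset.sum_le_sum hterm
          _ = K * Real.sqrt 2 * ∑ r, Real.sqrt ((∑ j, (w r j) ^ 2) + (b r) ^ 2) := by
              rw [Finset.mul_sum]
              exact Finset.sum_congr rfl fun r _ => by ring
      rw [abs_mul, abs_of_pos hτ]
      have hKs2 : 0 ≤ K * Real.sqrt 2 := by positivity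
      calc τ * |∑ r, a r ω * deriv Real.tanh ((∑ j, w0 r j * x j) + b0 r)
            * ((∑ j, w r j * x j) + b r)|
          ≤ τ * (K * Real.sqrt 2 * ∑ r, Real.sqrt ((∑ j, (w r j) ^ 2) + (b r) ^ 2)) :=
            mul_le_mul_of_nonneg_left hsum hτ.le
        _ ≤ τ * (K * Real.sqrt 2 * (1 / (12 * c1 * c2 * (εa : ℝ) * σwb * τ * (m : ℝ) ^ c8
              * Real.sqrt (Real.log m * Real.log (m * d))))) := by
            apply mul_le_mul_of_nonneg_left _ hτ.le
            exact mul_le_mul_of_nonneg_left hθ hKs2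
        _ = 1 / (3 * Real.sqrt 2 * c2 * σwb * (m : ℝ) ^ c8 * Real.sqrt (Real.log (m * d))) := by
            rw [hKdef, Real.sqrt_mul hLm.le]
            have hs2 : Real.sqrt 2 * Real.sqrt 2 = 2 :=
              Real.mul_self_sqrt (by norm_num)
            have h1 : Real.sqrt (Real.log m) ≠ 0 := by positivity
            have h2 : Real.sqrt (Real.log ((m:ℝ) * d)) ≠ 0 := by positivity
            have h3 : ((m:ℝ)) ^ c8 ≠ 0 := by positivity
            have h4 : Real.sqrt 2 ≠ 0 := by positivity
            field_simp
            ring_nf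
            rw [Real.sq_sqrt (show (0:ℝ) ≤ 2 by norm_num)]
            ring
    -- probabilistic part
    have hSmeas : MeasurableSet {y : ℝ | K < |y|} :=
      measurableSet_lt measurable_const measurable_abs
    set t : ℝ := Real.sqrt 2 * Real.exp (-K ^ 2 / (4 * (εa:ℝ) ^ 2)) with ht
    clear_value t
    have hone : ∀ r : Fin m, μ ((a r) ⁻¹' {y : ℝ | K < |y|}) ≤ ENNReal.ofReal t := by
      intro r
      rw [← Measure.map_apply (hmeas r) hSmeas, hdist r,
        Measure.map_apply measurable_abs hSmeas]
      have habs : (fun x : ℝ => |x|) ⁻¹' {y : ℝ | K < |y|} = {x : ℝ | K < |x|} := by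
        ext z; simp [abs_abs]
      rw [habs]
      have h := aux_tail (εa ^ 2) (by positivity) K hK0
      have hco : ((εa ^ 2 : ℝ≥0) : ℝ) = (εa:ℝ) ^ 2 := by push_cast; ring
      rw [ht]
      rw [hco] at h
      exact h
    have harith : (m:ℝ) * t ≤ 1 / c1 := by
      have hK2 : K ^ 2 = 4 * c1 ^ 2 * (εa:ℝ) ^ 2 * Real.log m := by
        rw [hKdef, mul_pow, mul_pow, mul_pow, Real.sq_sqrt hLm.le]; ring
      have heq : -K ^ 2 / (4 * (εa:ℝ) ^ 2) = (-(c1 ^ 2)) * Real.log m := by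
        rw [hK2]; field_simp
      have step : (m:ℝ) * t = Real.sqrt 2 * Real.exp ((1 - c1 ^ 2) * Real.log m) := by
        have hsplit : Real.exp ((1 - c1 ^ 2) * Real.log (m:ℝ))
            = Real.exp (Real.log (m:ℝ)) * Real.exp (-(c1 ^ 2) * Real.log (m:ℝ)) := by
          rw [← Real.exp_add]; ring_nf
        rw [ht, heq, hsplit, Real.exp_log (by positivity : (0:ℝ) < (m:ℝ))]
        ring
      have hmono : Real.exp ((1 - c1 ^ 2) * Real.log (m:ℝ))
          ≤ Real.exp ((1 - c1 ^ 2) * Real.log 2) := by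
        apply Real.exp_le_exp.mpr
        have hl2 : Real.log 2 ≤ Real.log (m:ℝ) :=
          Real.log_le_log (by norm_num) hm2'
        have hneg : 1 - c1 ^ 2 ≤ 0 := by nlinarith
        exact mul_le_mul_of_nonpos_left hl2 hneg
      have hfin : Real.sqrt 2 * Real.exp ((1 - c1 ^ 2) * Real.log 2) ≤ 1 / c1 := by
        have he : Real.exp ((1 - c1 ^ 2) * Real.log 2)
            = (Real.exp ((c1 ^ 2 - 1) * Real.log 2))⁻¹ := by
          rw [← Real.exp_neg]; ring_nf
        have hpos : (0:ℝ) < Real.exp ((c1 ^ 2 - 1) * Real.log 2) := Real.exp_pos _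
        have hbig : Real.sqrt 2 * c1 ≤ Real.exp ((c1 ^ 2 - 1) * Real.log 2) := by
          have h1 := Real.add_one_le_exp ((c1 ^ 2 - 1) * Real.log 2)
          have h2 : (2/3:ℝ) < Real.log 2 := lt_trans (by norm_num) Real.log_two_gt_d9
          have h3 : Real.sqrt 2 ≤ 2 := by
            have h4 : Real.sqrt 2 ≤ Real.sqrt 4 := Real.sqrt_le_sqrt (by norm_num)
            have h5 : Real.sqrt 4 = 2 := by
              rw [show (4:ℝ) = 2 ^ 2 by norm_num, Real.sqrt_sq (by norm_num : (0:ℝ) ≤ 2)]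
            linarith
          have h4 : (0:ℝ) ≤ c1 ^ 2 - 1 := by nlinarith
          have h5 : (c1 ^ 2 - 1) * (2/3:ℝ) ≤ (c1 ^ 2 - 1) * Real.log 2 :=
            mul_le_mul_of_nonneg_left h2.le h4
          have h6 : Real.sqrt 2 * c1 ≤ 2 * c1 :=
            mul_le_mul_of_nonneg_right h3 (le_of_lt hc1')
          have h7 : 2 * c1 ≤ (c1 ^ 2 - 1) * (2/3:ℝ) + 1 := by
            nlinarith [sq_nonneg (c1 - 10)]
          linarith
        rw [he, le_div_iff₀ hc1',
          show Real.sqrt 2 * (Real.exp ((c1 ^ 2 - 1) * Real.log 2))⁻¹ * c1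
            = (Real.sqrt 2 * c1) / Real.exp ((c1 ^ 2 - 1) * Real.log 2) from by ring,
          div_le_one hpos]
        exact hbig
      calc (m:ℝ) * t = Real.sqrt 2 * Real.exp ((1 - c1 ^ 2) * Real.log m) := step
        _ ≤ Real.sqrt 2 * Real.exp ((1 - c1 ^ 2) * Real.log 2) :=
            mul_le_mul_of_nonneg_left hmono (Real.sqrt_nonneg 2)
        _ ≤ 1 / c1 := hfin
    have hcompl : μ Gᶜ ≤ ENNReal.ofReal (1 / c1) := by
      have hGc : Gᶜ = ⋃ r, (a r) ⁻¹' {y : ℝ | K < |y|} := by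
        ext ω; simp [hG, Set.mem_iUnion, not_forall, not_le]
      calc μ Gᶜ ≤ ∑' r, μ ((a r) ⁻¹' {y : ℝ | K < |y|}) := by
            rw [hGc]; exact measure_iUnion_le _
        _ = ∑ r, μ ((a r) ⁻¹' {y : ℝ | K < |y|}) := tsum_fintype _
        _ ≤ ∑ _r : Fin m, ENNReal.ofReal t := Finset.sum_le_sum fun r _ => hone r
        _ = (m : ENNReal) * ENNReal.ofReal t := by
            rw [Finset.sum_const, Finset.card_univ, Fintype.card_fin, nsmul_eq_mul]
        _ = ENNReal.ofReal ((m:ℝ) * t) := by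
            rw [ENNReal.ofReal_mul (by positivity), ENNReal.ofReal_natCast]
        _ ≤ ENNReal.ofReal (1 / c1) := ENNReal.ofReal_le_ofReal harith
    have hGmu : ENNReal.ofReal (1 - 1 / c1) ≤ μ G := by
      have h1 : μ G = 1 - μ Gᶜ := by
        have h0 := prob_compl_eq_one_sub (μ := μ) hGmeas.compl
        rwa [compl_compl] at h0
      have h2 : ENNReal.ofReal (1 - 1 / c1) = 1 - ENNReal.ofReal (1 / c1) := by
        rw [ENNReal.ofReal_sub _ (by positivity), ENNReal.ofReal_one]
      rw [h1, h2]
      exact tsub_le_tsub_left hcompl 1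
    exact le_trans hGmu (measure_mono hsub)
end
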